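/- Let G be a finite simple graph on vertex set V and let u, w ∈ V be adjacent in G. Suppose f = ∏_{j=1}^{d} p_{I_j} − ∏_{j=1}^{d} p_{J_j} is a nonzero binomial in I_G such that I_j(u) = I_j(w) and J_j(u) = J_j(w) for all j ∈ {1,…,d}. Let G/uw be the graph on V∖{w} in which distinct vertices a, b are adjacent iff a and b are adjacent in G, or a = u and w is adjacent to b in G, or b = u and w is adjacent to a in G; and let f̃ = ∏_{j=1}^{d} p_{I_j|_{V∖{w}}} − ∏_{j=1}^{d} p_{J_j|_{V∖{w}}}. Then f̃ ∈ I_{G/uw}, and f is a minimal generator of I_G if and only if f̃ is a minimal generator of I_{G/uw}. -/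

import Mathlib

/-!
Deleting the coordinate `w` and duplicating the coordinate `u` into `w` identify the index
strings on `V ∖ {w}` with the strings `I` on `V` satisfying `I u = I w`. This induces two ring
maps: `rename` sends `p_K` to `p_{K ∘ π}`, where `π = contractVertex : V → V ∖ {w}` sends `w` to
`u`, and its left inverse `killCompl` sends `p_I` to `p_{I|V∖{w}}` if `I u = I w` and to `0`
otherwise. Both send variables to variables or `0`, so they preserve the irrelevant ideal, and
they exchange `f` and `f̃`. It remains to see that each maps one toric ideal into the other. A
linear map that is constant on the fibres of a monomial map kills its kernel, and the fibres of
`φ_G` on monomials are the classes of tables with equal `G`-marginals. For tables supported on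
strings with `I u = I w`, the `G`-marginals and the `G/uw`-marginals determine each other, and
by the `uw`-marginal such support is itself read off from the `G`-marginals.
-/

open MvPolynomial Finset

namespace BinaryGraphModels

variable {V : Type} [Fintype V] [DecidableEq V]

/-- The monomial map `φ_G` of the binary graph model: the variable `p_I` is sent to the
product over edges `{j,k}` of the variable `t^{jk}_{I(j)I(k)}` (encoded as the unordered pair
`{(j, I j), (k, I k)}`) times the product over isolated vertices `l` of `t^{l}_{I(l)}`. -/
noncomputable def phi (G : SimpleGraph V) :
    MvPolynomial (V → Bool) ℂ →ₐ[ℂ] MvPolynomial (Sym2 (V × Bool) ⊕ (V × Bool)) ℂ := by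
  letI : DecidableRel G.Adj := Classical.decRel _
  exact aeval fun I : V → Bool =>
    (∏ e ∈ G.edgeFinset,
      (X (Sum.inl (Sym2.map (fun v => (v, I v)) e)) :
        MvPolynomial (Sym2 (V × Bool) ⊕ (V × Bool)) ℂ)) *
    ∏ l ∈ univ.filter (fun l : V => ∀ k, ¬ G.Adj l k), X (Sum.inr (l, I l))

/-- The toric ideal `I_G` of the binary graph model of `G`. -/
noncomputable def toricIdeal (G : SimpleGraph V) : Ideal (MvPolynomial (V → Bool) ℂ) :=
  RingHom.ker (phi G).toRingHom

/-- `I_G` is generated in degree at most `d`. -/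
def GenInDegLE (G : SimpleGraph V) (d : ℕ) : Prop :=
  toricIdeal G =
    Ideal.span {f : MvPolynomial (V → Bool) ℂ | f ∈ toricIdeal G ∧ f.totalDegree ≤ d}

/-- The Markov width `μ(G)`: the least `d` such that `I_G` is generated in degree `≤ d`. -/
noncomputable def markovWidth (G : SimpleGraph V) : ℕ :=
  sInf {d : ℕ | GenInDegLE G d}

/-- `f` is a minimal generator of `I_G`, i.e. `f ∈ I_G` and `f ∉ 𝔪 · I_G` where `𝔪` is the
irrelevant maximal ideal generated by all the variables. -/
def IsMinimalGenerator (G : SimpleGraph V) (f : MvPolynomial (V → Bool) ℂ) : Prop :=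
  f ∈ toricIdeal G ∧
    f ∉ Ideal.span (Set.range (X : (V → Bool) → MvPolynomial (V → Bool) ℂ)) * toricIdeal G

/-- Two integer tables have the same `G`-marginals: equal two-way marginals along every edge
and equal one-way marginals at every isolated vertex. -/
def MarginalsEq (G : SimpleGraph V) (v₁ v₂ : (V → Bool) → ℤ) : Prop :=
  (∀ j k : V, G.Adj j k → ∀ a b : Bool,
    (∑ I : V → Bool, if I j = a ∧ I k = b then v₁ I else 0) =
    (∑ I : V → Bool, if I j = a ∧ I k = b then v₂ I else 0)) ∧
  (∀ l : V, (∀ k, ¬ G.Adj l k) → ∀ a : Bool,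
    (∑ I : V → Bool, if I l = a then v₁ I else 0) =
    (∑ I : V → Bool, if I l = a then v₂ I else 0))

/-- `B` is a Markov basis for `G`: any two nonnegative tables with the same `G`-marginals are
connected by a path of moves from `±B` staying nonnegative. -/
def IsMarkovBasis (G : SimpleGraph V) (B : Finset ((V → Bool) → ℤ)) : Prop :=
  ∀ v₁ v₂ : (V → Bool) → ℤ, (∀ I, 0 ≤ v₁ I) → (∀ I, 0 ≤ v₂ I) →
    MarginalsEq G v₁ v₂ →
    ∃ L : List ((V → Bool) → ℤ),
      (∀ u ∈ L, u ∈ B ∨ -u ∈ B) ∧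
      v₁ + L.sum = v₂ ∧
      ∀ n : ℕ, n ≤ L.length → ∀ I, 0 ≤ (v₁ + (L.take n).sum) I

/-- The binomial `p^{u⁺} - p^{u⁻}` associated to an integer table `u`. -/
noncomputable def moveBinomial (u : (V → Bool) → ℤ) : MvPolynomial (V → Bool) ℂ :=
  (∏ I : V → Bool, X I ^ (u I).toNat) - ∏ I : V → Bool, X I ^ (-u I).toNat

end BinaryGraphModels

namespace BinaryGraphModels

/-- The graph obtained from `G` by contracting the edge `{u, w}` onto the vertex `u`: on the
vertex set `V ∖ {w}`, distinct vertices `a, b` are adjacent iff they were adjacent in `G`, or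
`a = u` and `w` was adjacent to `b`, or `b = u` and `w` was adjacent to `a`. -/
def contractEdge {V : Type} (G : SimpleGraph V) (u w : V) :
    SimpleGraph {x : V // x ≠ w} where
  Adj a b := a ≠ b ∧
    (G.Adj a.val b.val ∨ (a.val = u ∧ G.Adj w b.val) ∨ (b.val = u ∧ G.Adj w a.val))
  symm := by
    constructor
    rintro a b ⟨hne, h⟩
    refine ⟨hne.symm, ?_⟩
    rcases h with h | h | h
    · exact Or.inl h.symm
    · exact Or.inr (Or.inr h)
    · exact Or.inr (Or.inl h)
  loopless := ⟨fun a h => h.1 rfl⟩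

theorem _root_.MvPolynomial.aeval_monomial_one_of_monomial {R σ τ : Type*} [CommSemiring R]
    [Fintype σ] (e : σ → τ →₀ ℕ) (s : σ →₀ ℕ) :
    aeval (fun i => (monomial (e i) 1 : MvPolynomial τ R)) (monomial s (1 : R)) =
      monomial (∑ i, s i • e i) 1 := by
  simp only [aeval_monomial, map_one, one_mul, monomial_pow, one_pow, monomial_sum_one]
  exact Finsupp.prod_fintype _ _ fun _ => by simp

theorem _root_.MvPolynomial.map_eq_zero_of_factorsThrough {R σ τ M : Type*} [CommSemiring R]
    [AddCommMonoid M] [Module R M] (φ : MvPolynomial σ R →ₗ[R] MvPolynomial τ R)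
    (T : (σ →₀ ℕ) → τ →₀ ℕ) (hφ : ∀ s, φ (monomial s 1) = monomial (T s) 1)
    (ψ : MvPolynomial σ R →ₗ[R] M)
    (hψ : Function.FactorsThrough (fun s => ψ (monomial s 1)) T)
    {p : MvPolynomial σ R} (hp : φ p = 0) : ψ p = 0 := by
  let L : MvPolynomial τ R →ₗ[R] M :=
    Finsupp.linearCombination R (Function.extend T (fun s => ψ (monomial s 1)) 0) ∘ₗ
      (AddMonoidAlgebra.coeffLinearEquiv R).toLinearMap
  have hL : ∀ t, L (monomial t 1) = Function.extend T (fun s => ψ (monomial s 1)) 0 t := by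
    intro t
    simp only [L, monomial, AddMonoidAlgebra.lsingle_apply, LinearMap.comp_apply,
      LinearEquiv.coe_coe, AddMonoidAlgebra.coeffLinearEquiv_apply, AddMonoidAlgebra.coeff_single,
      Finsupp.linearCombination_single, one_smul]
  have hψL : ψ = L ∘ₗ φ := by
    ext s : 1
    refine LinearMap.ext_ring ?_
    change ψ (monomial s 1) = L (φ (monomial s 1))
    rw [hφ, hL, hψ.extend_apply]
  rw [hψL, LinearMap.comp_apply, hp, map_zero]

theorem _root_.MvPolynomial.rename_X_mem_span_range_X {R σ τ : Type*} [CommSemiring R]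
    (f : σ → τ) (i : σ) :
    rename (R := R) f (X i) ∈ Ideal.span (Set.range (X : τ → MvPolynomial τ R)) := by
  rw [rename_X]
  exact Ideal.subset_span ⟨_, rfl⟩

theorem _root_.MvPolynomial.killCompl_X_mem_span_range_X {R σ τ : Type*} [CommSemiring R]
    {f : σ → τ} (hf : Function.Injective f) (i : τ) :
    killCompl (R := R) hf (X i) ∈ Ideal.span (Set.range (X : σ → MvPolynomial σ R)) := by
  rw [killCompl, aeval_X]
  split_ifs
  exacts [Ideal.subset_span ⟨_, rfl⟩, zero_mem _]

theorem _root_.Fintype.sum_mapDomain_of_injective {α β M N : Type*} [Fintype α] [Fintype β]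
    [AddCommMonoid M] [AddCommMonoid N] {f : α → β} (hf : Function.Injective f) (t : α →₀ M)
    (g : β → M → N) (hg : ∀ b, g b 0 = 0) :
    ∑ a, g (f a) (t a) = ∑ b, g b (t.mapDomain f b) :=
  Fintype.sum_of_injective f hf _ _
    (fun b hb => by rw [Finsupp.mapDomain_of_notMem_range _ _ hb, hg])
    fun a => by rw [Finsupp.mapDomain_apply hf]

section Marginals

variable {U : Type} [Fintype U] [DecidableEq U] {M : Type*} [AddCommMonoid M]

def pairMarginal (v : (U → Bool) → M) (j k : U) (a b : Bool) : M :=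
  ∑ I : U → Bool, if I j = a ∧ I k = b then v I else 0

def vertexMarginal (v : (U → Bool) → M) (l : U) (a : Bool) : M :=
  ∑ I : U → Bool, if I l = a then v I else 0

theorem pairMarginal_self (v : (U → Bool) → M) (j : U) (a b : Bool) :
    pairMarginal v j j a b = if a = b then vertexMarginal v j a else 0 := by
  split_ifs with hab
  · simp only [pairMarginal, vertexMarginal, hab, and_self]
  · refine Finset.sum_eq_zero fun I _ => if_neg ?_
    rintro ⟨rfl, rfl⟩
    exact hab rfl

theorem sum_pairMarginal (v : (U → Bool) → M) (j k : U) (a : Bool) :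
    ∑ b, pairMarginal v j k a b = vertexMarginal v j a := by
  simp only [pairMarginal, vertexMarginal, ite_and]
  rw [Finset.sum_comm]
  refine Finset.sum_congr rfl fun I _ => ?_
  split_ifs <;> simp

theorem marginalsEq_iff {G : SimpleGraph U} {v v' : (U → Bool) → ℤ} :
    MarginalsEq G v v' ↔
      (∀ j k, G.Adj j k → ∀ a b, pairMarginal v j k a b = pairMarginal v' j k a b) ∧
        ∀ l, (∀ k, ¬ G.Adj l k) → ∀ a, vertexMarginal v l a = vertexMarginal v' l a :=
  Iff.rfl

theorem MarginalsEq.symm {G : SimpleGraph U} {v v' : (U → Bool) → ℤ} (h : MarginalsEq G v v') :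
    MarginalsEq G v' v :=
  ⟨fun j k hjk a b => (h.1 j k hjk a b).symm, fun l hl a => (h.2 l hl a).symm⟩

theorem MarginalsEq.pairMarginal_eq {G : SimpleGraph U} {v v' : (U → Bool) → ℤ}
    (h : MarginalsEq G v v') {j k : U} (hjk : G.Adj j k) (a b : Bool) :
    pairMarginal v j k a b = pairMarginal v' j k a b :=
  h.1 j k hjk a b

theorem MarginalsEq.vertexMarginal_eq {G : SimpleGraph U} {v v' : (U → Bool) → ℤ}
    (h : MarginalsEq G v v') (l : U) (a : Bool) :
    vertexMarginal v l a = vertexMarginal v' l a := by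
  by_cases hl : ∀ k, ¬ G.Adj l k
  · exact h.2 l hl a
  · obtain ⟨k, hlk⟩ := not_forall_not.1 hl
    simp only [← sum_pairMarginal _ l k, h.pairMarginal_eq hlk]

theorem MarginalsEq.support_subset_setOf_eq {G : SimpleGraph U} {s s' : (U → Bool) →₀ ℕ}
    (hM : MarginalsEq G (fun I => (s I : ℤ)) (fun I => (s' I : ℤ))) {u w : U} (huw : G.Adj u w)
    (hs : (s.support : Set (U → Bool)) ⊆ {I | I u = I w}) :
    (s'.support : Set (U → Bool)) ⊆ {I | I u = I w} := by
  intro I hI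
  by_contra hne
  have hzero : pairMarginal (fun I => (s I : ℤ)) u w (I u) (I w) = 0 :=
    Finset.sum_eq_zero fun J _ => by
      split_ifs with hJ
      · rw [Int.natCast_eq_zero, ← Finsupp.notMem_support_iff]
        exact fun hJs => hne (show I u = I w by rw [← hJ.1, ← hJ.2]; exact hs hJs)
      · rfl
  rw [hM.pairMarginal_eq huw] at hzero
  have := (Finset.sum_eq_zero_iff_of_nonneg fun J _ => ?_).1 hzero I (Finset.mem_univ I)
  · exact Finsupp.mem_support_iff.1 hI (by simpa using this)
  · split_ifs
    exacts [Int.natCast_nonneg _, le_rfl]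

end Marginals

theorem sym2_map_graph_eq_iff {V : Type} (I : V → Bool) (e : Sym2 V) (j k : V) (a b : Bool) :
    Sym2.map (fun v => (v, I v)) e = s((j, a), (k, b)) ↔ e = s(j, k) ∧ I j = a ∧ I k = b := by
  induction e using Sym2.ind with
  | _ x y =>
    simp only [Sym2.map_mk, Sym2.eq_iff, Prod.mk.injEq]
    constructor
    · rintro (⟨⟨rfl, rfl⟩, rfl, rfl⟩ | ⟨⟨rfl, rfl⟩, rfl, rfl⟩) <;> simp
    · rintro ⟨(⟨rfl, rfl⟩ | ⟨rfl, rfl⟩), rfl, rfl⟩ <;> simp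

section MonomialMap

variable {V : Type} [Fintype V]

noncomputable def phiExponent (G : SimpleGraph V) (I : V → Bool) :
    Sym2 (V × Bool) ⊕ (V × Bool) →₀ ℕ := by
  letI : DecidableRel G.Adj := Classical.decRel _
  exact (∑ e ∈ G.edgeFinset, Finsupp.single (Sum.inl (Sym2.map (fun v => (v, I v)) e)) 1) +
    ∑ l ∈ univ.filter (fun l : V => ∀ k, ¬ G.Adj l k), Finsupp.single (Sum.inr (l, I l)) 1

theorem phi_eq_aeval (G : SimpleGraph V) :
    phi G = aeval fun I => monomial (phiExponent G I) 1 := by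
  ext I : 1
  rw [phi, aeval_X, aeval_X, phiExponent, ← mul_one (1 : ℂ), ← monomial_mul, monomial_sum_one,
    monomial_sum_one]
  rfl

theorem phiExponent_inl (G : SimpleGraph V) [DecidableRel G.Adj] (I : V → Bool) (j k : V)
    (a b : Bool) :
    phiExponent G I (Sum.inl s((j, a), (k, b))) =
      if G.Adj j k ∧ I j = a ∧ I k = b then 1 else 0 := by
  classical
  simp [phiExponent, Finsupp.single_apply, sym2_map_graph_eq_iff, ite_and]

theorem phiExponent_inr (G : SimpleGraph V) [DecidableRel G.Adj] (I : V → Bool) (l : V)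
    (a : Bool) :
    phiExponent G I (Sum.inr (l, a)) = if (∀ k, ¬ G.Adj l k) ∧ I l = a then 1 else 0 := by
  classical
  simp [phiExponent, Finsupp.single_apply, ite_and]

variable [DecidableEq V]

theorem phi_monomial (G : SimpleGraph V) (s : (V → Bool) →₀ ℕ) :
    phi G (monomial s 1) = monomial (∑ I, s I • phiExponent G I) 1 := by
  rw [phi_eq_aeval, aeval_monomial_one_of_monomial]

theorem sum_smul_phiExponent_inl (G : SimpleGraph V) [DecidableRel G.Adj]
    (s : (V → Bool) →₀ ℕ) (j k : V) (a b : Bool) :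
    (((∑ I, s I • phiExponent G I) (Sum.inl s((j, a), (k, b))) : ℕ) : ℤ) =
      if G.Adj j k then pairMarginal (fun I => (s I : ℤ)) j k a b else 0 := by
  split_ifs with hjk <;>
    simp [Finsupp.finsetSum_apply, phiExponent_inl, hjk, pairMarginal]

theorem sum_smul_phiExponent_inr (G : SimpleGraph V) [DecidableRel G.Adj]
    (s : (V → Bool) →₀ ℕ) (l : V) (a : Bool) :
    (((∑ I, s I • phiExponent G I) (Sum.inr (l, a)) : ℕ) : ℤ) =
      if ∀ k, ¬ G.Adj l k then vertexMarginal (fun I => (s I : ℤ)) l a else 0 := by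
  split_ifs with hl <;>
    simp [Finsupp.finsetSum_apply, phiExponent_inr, hl, vertexMarginal]

theorem sum_smul_phiExponent_eq_iff (G : SimpleGraph V) (s s' : (V → Bool) →₀ ℕ) :
    ∑ I, s I • phiExponent G I = ∑ I, s' I • phiExponent G I ↔
      MarginalsEq G (fun I => (s I : ℤ)) (fun I => (s' I : ℤ)) := by
  classical
  constructor
  · intro h
    refine ⟨fun j k hjk a b => ?_, fun l hl a => ?_⟩
    · have := congrArg (fun t => ((t (Sum.inl s((j, a), (k, b))) : ℕ) : ℤ)) h
      rwa [sum_smul_phiExponent_inl, sum_smul_phiExponent_inl, if_pos hjk, if_pos hjk] at this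
    · have := congrArg (fun t => ((t (Sum.inr (l, a)) : ℕ) : ℤ)) h
      rwa [sum_smul_phiExponent_inr, sum_smul_phiExponent_inr, if_pos hl, if_pos hl] at this
  · intro h
    ext x
    apply Nat.cast_injective (R := ℤ)
    rcases x with z | ⟨l, a⟩
    · induction z using Sym2.ind with
      | _ x y =>
        obtain ⟨j, a⟩ := x
        obtain ⟨k, b⟩ := y
        simp only [sum_smul_phiExponent_inl]
        split_ifs with hjk
        · exact h.pairMarginal_eq hjk a b
        · rfl
    · simp only [sum_smul_phiExponent_inr]
      split_ifs with hl
      · exact h.vertexMarginal_eq l a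
      · rfl

end MonomialMap

theorem toricIdeal_le_comap_of_marginalsEq {V W : Type} [Fintype V] [DecidableEq V] [Fintype W]
    [DecidableEq W] (G : SimpleGraph V) (H : SimpleGraph W)
    (ψ : MvPolynomial (V → Bool) ℂ →ₐ[ℂ] MvPolynomial (W → Bool) ℂ)
    (hψ : ∀ s s' : (V → Bool) →₀ ℕ, MarginalsEq G (fun I => (s I : ℤ)) (fun I => (s' I : ℤ)) →
      phi H (ψ (monomial s 1)) = phi H (ψ (monomial s' 1))) :
    toricIdeal G ≤ (toricIdeal H).comap ψ := fun _ hp =>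
  map_eq_zero_of_factorsThrough (phi G).toLinearMap _ (phi_monomial G)
    ((phi H).comp ψ).toLinearMap
    (fun s s' h => hψ s s' ((sum_smul_phiExponent_eq_iff G s s').1 h)) hp

theorem IsMinimalGenerator.of_comap {V W : Type} [Fintype V] [DecidableEq V] [Fintype W]
    [DecidableEq W] {G : SimpleGraph V} {H : SimpleGraph W}
    (χ : MvPolynomial (W → Bool) ℂ →ₐ[ℂ] MvPolynomial (V → Bool) ℂ)
    (hχ : toricIdeal H ≤ (toricIdeal G).comap χ)
    (hχX : ∀ K, χ (X K) ∈ Ideal.span (Set.range (X : (V → Bool) → MvPolynomial (V → Bool) ℂ)))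
    {g : MvPolynomial (W → Bool) ℂ} (hg : g ∈ toricIdeal H) (hχg : IsMinimalGenerator G (χ g)) :
    IsMinimalGenerator H g := by
  refine ⟨hg, fun hmem => hχg.2 ?_⟩
  have hmap := Ideal.mem_map_of_mem χ hmem
  rw [Ideal.map_mul, Ideal.map_span] at hmap
  refine Ideal.mul_mono (Ideal.span_le.2 ?_) (Ideal.map_le_iff_le_comap.2 hχ) hmap
  rintro _ ⟨_, ⟨K, rfl⟩, rfl⟩
  exact hχX K

section Contraction

variable {V : Type} [DecidableEq V] {u w : V}

def contractVertex (hu : u ≠ w) (v : V) : {x : V // x ≠ w} :=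
  if h : v = w then ⟨u, hu⟩ else ⟨v, h⟩

theorem contractVertex_val (hu : u ≠ w) (x : {x : V // x ≠ w}) : contractVertex hu x.val = x := by
  simp [contractVertex, x.2]

theorem contractVertex_self (hu : u ≠ w) : contractVertex hu w = ⟨u, hu⟩ := by
  simp [contractVertex]

theorem restrict_comp_contractVertex (hu : u ≠ w) {I : V → Bool} (h : I u = I w) :
    (fun x : {x : V // x ≠ w} => I x.val) ∘ contractVertex hu = I := by
  funext v
  by_cases hv : v = w
  · simp [hv, contractVertex_self, h]
  · simp [contractVertex, hv]

theorem comp_contractVertex_injective (hu : u ≠ w) :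
    Function.Injective fun K : {x : V // x ≠ w} → Bool => K ∘ contractVertex hu := by
  intro K K' h
  funext x
  simpa [contractVertex_val] using congrFun h x.val

theorem contractEdge_adj_contractVertex (G : SimpleGraph V) (hu : u ≠ w) {j k : V}
    (hjk : G.Adj j k) (hne : contractVertex hu j ≠ contractVertex hu k) :
    (contractEdge G u w).Adj (contractVertex hu j) (contractVertex hu k) := by
  refine ⟨hne, ?_⟩
  by_cases hj : j = w
  · subst hj
    have hk : k ≠ j := hjk.ne.symm
    simp [contractVertex, hk, hjk]
  · by_cases hk : k = w
    · subst hk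
      simp [contractVertex, hj, hjk.symm]
    · simp [contractVertex, hj, hk, hjk]

theorem rename_X_restrict {R : Type*} [CommSemiring R] (hu : u ≠ w) {I : V → Bool}
    (h : I u = I w) :
    rename (R := R) (· ∘ contractVertex hu) (X fun x : {x : V // x ≠ w} => I x.val) = X I := by
  rw [rename_X, restrict_comp_contractVertex hu h]

theorem range_comp_contractVertex (hu : u ≠ w) :
    Set.range (· ∘ contractVertex hu) = {I : V → Bool | I u = I w} := by
  ext I
  constructor
  · rintro ⟨K, rfl⟩
    simp [contractVertex, hu]
  · exact fun h => ⟨_, restrict_comp_contractVertex hu h⟩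

variable [Fintype V]

theorem pairMarginal_mapDomain_comp_contractVertex (hu : u ≠ w)
    (t : ({x : V // x ≠ w} → Bool) →₀ ℕ) (j k : V) (a b : Bool) :
    pairMarginal (fun I => (t.mapDomain (· ∘ contractVertex hu) I : ℤ)) j k a b =
      pairMarginal (fun K => (t K : ℤ)) (contractVertex hu j) (contractVertex hu k) a b :=
  (Fintype.sum_mapDomain_of_injective (comp_contractVertex_injective hu) t
    (fun I n => if I j = a ∧ I k = b then (n : ℤ) else 0) fun _ => by simp).symm

theorem vertexMarginal_mapDomain_comp_contractVertex (hu : u ≠ w)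
    (t : ({x : V // x ≠ w} → Bool) →₀ ℕ) (l : V) (a : Bool) :
    vertexMarginal (fun I => (t.mapDomain (· ∘ contractVertex hu) I : ℤ)) l a =
      vertexMarginal (fun K => (t K : ℤ)) (contractVertex hu l) a :=
  (Fintype.sum_mapDomain_of_injective (comp_contractVertex_injective hu) t
    (fun I n => if I l = a then (n : ℤ) else 0) fun _ => by simp).symm

theorem marginalsEq_mapDomain_comp_contractVertex_iff (G : SimpleGraph V) (hu : u ≠ w)
    (t t' : ({x : V // x ≠ w} → Bool) →₀ ℕ) :
    MarginalsEq G (fun I => (t.mapDomain (· ∘ contractVertex hu) I : ℤ))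
        (fun I => (t'.mapDomain (· ∘ contractVertex hu) I : ℤ)) ↔
      MarginalsEq (contractEdge G u w) (fun K => (t K : ℤ)) (fun K => (t' K : ℤ)) := by
  constructor
  · intro hM
    refine marginalsEq_iff.2 ⟨fun x y hxy a b => ?_, fun l _ a => ?_⟩
    · have hG : ∀ j k, G.Adj j k → contractVertex hu j = x → contractVertex hu k = y →
          pairMarginal (fun K => (t K : ℤ)) x y a b =
            pairMarginal (fun K => (t' K : ℤ)) x y a b := by
        rintro j k hjk rfl rfl
        rw [← pairMarginal_mapDomain_comp_contractVertex,
          ← pairMarginal_mapDomain_comp_contractVertex]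
        exact hM.pairMarginal_eq hjk a b
      have hw : ∀ z : {x : V // x ≠ w}, z.val = u → contractVertex hu w = z := fun z hz => by
        rw [contractVertex_self]
        exact Subtype.ext hz.symm
      obtain ⟨-, hxy | ⟨hx, hwy⟩ | ⟨hy, hwx⟩⟩ := hxy
      · exact hG _ _ hxy (contractVertex_val hu x) (contractVertex_val hu y)
      · exact hG _ _ hwy (hw x hx) (contractVertex_val hu y)
      · exact hG _ _ hwx.symm (contractVertex_val hu x) (hw y hy)
    · rw [← contractVertex_val hu l, ← vertexMarginal_mapDomain_comp_contractVertex,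
        ← vertexMarginal_mapDomain_comp_contractVertex]
      exact hM.vertexMarginal_eq _ a
  · intro hM
    refine marginalsEq_iff.2 ⟨fun j k hjk a b => ?_, fun l _ a => ?_⟩
    · rw [pairMarginal_mapDomain_comp_contractVertex, pairMarginal_mapDomain_comp_contractVertex]
      by_cases hne : contractVertex hu j = contractVertex hu k
      · simp only [hne, pairMarginal_self, hM.vertexMarginal_eq]
      · exact hM.pairMarginal_eq (contractEdge_adj_contractVertex G hu hjk hne) a b
    · rw [vertexMarginal_mapDomain_comp_contractVertex,
        vertexMarginal_mapDomain_comp_contractVertex]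
      exact hM.vertexMarginal_eq _ a

theorem toricIdeal_contractEdge_le_comap_rename (G : SimpleGraph V) (hu : u ≠ w) :
    toricIdeal (contractEdge G u w) ≤ (toricIdeal G).comap (rename (· ∘ contractVertex hu)) :=
  toricIdeal_le_comap_of_marginalsEq _ _ _ fun t t' h => by
    rw [rename_monomial, rename_monomial, phi_monomial, phi_monomial,
      (sum_smul_phiExponent_eq_iff G _ _).2
        ((marginalsEq_mapDomain_comp_contractVertex_iff G hu t t').2 h)]

theorem toricIdeal_le_comap_killCompl (G : SimpleGraph V) (huw : G.Adj u w) :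
    toricIdeal G ≤ (toricIdeal (contractEdge G u w)).comap
      (killCompl (comp_contractVertex_injective huw.ne)) := by
  refine toricIdeal_le_comap_of_marginalsEq _ _ _ fun s s' hM => ?_
  by_cases hs : (s.support : Set (V → Bool)) ⊆ {I | I u = I w}
  · have hs' := hM.support_subset_setOf_eq huw hs
    rw [← range_comp_contractVertex huw.ne] at hs hs'
    rw [killCompl_monomial_eq_monomial_comapDomain_of_subset _ _ hs,
      killCompl_monomial_eq_monomial_comapDomain_of_subset _ _ hs', phi_monomial, phi_monomial,
      (sum_smul_phiExponent_eq_iff _ _ _).2]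
    have hinj := comp_contractVertex_injective huw.ne
    rw [← marginalsEq_mapDomain_comp_contractVertex_iff G huw.ne,
      Finsupp.mapDomain_comapDomain _ hinj s hs, Finsupp.mapDomain_comapDomain _ hinj s' hs']
    exact hM
  · have hs' := mt (hM.symm.support_subset_setOf_eq huw) hs
    rw [← range_comp_contractVertex huw.ne] at hs hs'
    rw [killCompl_monomial_eq_zero_of_not_subset _ _ hs,
      killCompl_monomial_eq_zero_of_not_subset _ _ hs']

end Contraction

theorem minimalGenerator_contractEdge_general {V : Type} [Fintype V] [DecidableEq V]
    (G : SimpleGraph V) (u w : V) (huw : G.Adj u w) (d : ℕ)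
    (Istr Jstr : Fin d → (V → Bool))
    (hI : ∀ j, Istr j u = Istr j w) (hJ : ∀ j, Jstr j u = Jstr j w)
    (f : MvPolynomial (V → Bool) ℂ)
    (hfdef : f = (∏ j : Fin d, X (Istr j)) - ∏ j : Fin d, X (Jstr j))
    (hfI : f ∈ toricIdeal G) :
    ((∏ j : Fin d, X (fun x : {x : V // x ≠ w} => Istr j x.val)) -
        (∏ j : Fin d, X (fun x : {x : V // x ≠ w} => Jstr j x.val)) ∈
      toricIdeal (contractEdge G u w)) ∧
    (IsMinimalGenerator G f ↔
      IsMinimalGenerator (contractEdge G u w)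
        ((∏ j : Fin d, X (fun x : {x : V // x ≠ w} => Istr j x.val)) -
          ∏ j : Fin d, X (fun x : {x : V // x ≠ w} => Jstr j x.val))) := by
  have hu := huw.ne
  have hrename : rename (· ∘ contractVertex hu)
      ((∏ j : Fin d, X (fun x : {x : V // x ≠ w} => Istr j x.val)) -
        ∏ j : Fin d, X (fun x : {x : V // x ≠ w} => Jstr j x.val)) = f := by
    simp only [map_sub, map_prod, rename_X_restrict hu (hI _), rename_X_restrict hu (hJ _), hfdef]
  have hkill := congrArg (killCompl (comp_contractVertex_injective hu)) hrename
  rw [killCompl_rename_app] at hkill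
  have hmem := toricIdeal_le_comap_killCompl G huw hfI
  rw [Ideal.mem_comap, ← hkill] at hmem
  exact ⟨hmem,
    fun h => .of_comap _ (toricIdeal_contractEdge_le_comap_rename G hu)
      (rename_X_mem_span_range_X _) hmem (hrename ▸ h),
    fun h => .of_comap _ (toricIdeal_le_comap_killCompl G huw)
      (killCompl_X_mem_span_range_X _) hfI (hkill ▸ h)⟩

/-- Lemma on edge contraction: if `f = ∏ p_{I_j} - ∏ p_{J_j}` is a nonzero
binomial in `I_G` all of whose index strings take equal values at the two adjacent vertices
`u` and `w`, then the image binomial `f̃` obtained by deleting the coordinate `w` lies in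
`I_{G/uw}`, and `f` is a minimal generator of `I_G` iff `f̃` is a minimal generator of
`I_{G/uw}`. -/
theorem minimalGenerator_contractEdge {V : Type} [Fintype V] [DecidableEq V]
    (G : SimpleGraph V) (u w : V) (huw : G.Adj u w) (d : ℕ)
    (Istr Jstr : Fin d → (V → Bool))
    (hI : ∀ j, Istr j u = Istr j w) (hJ : ∀ j, Jstr j u = Jstr j w)
    (f : MvPolynomial (V → Bool) ℂ)
    (hfdef : f = (∏ j : Fin d, X (Istr j)) - ∏ j : Fin d, X (Jstr j))
    (hf0 : f ≠ 0)
    (hfI : f ∈ toricIdeal G) :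
    ((∏ j : Fin d, X (fun x : {x : V // x ≠ w} => Istr j x.val)) -
        (∏ j : Fin d, X (fun x : {x : V // x ≠ w} => Jstr j x.val)) ∈
      toricIdeal (contractEdge G u w)) ∧
    (IsMinimalGenerator G f ↔
      IsMinimalGenerator (contractEdge G u w)
        ((∏ j : Fin d, X (fun x : {x : V // x ≠ w} => Istr j x.val)) -
          ∏ j : Fin d, X (fun x : {x : V // x ≠ w} => Jstr j x.val))) :=
  minimalGenerator_contractEdge_general G u w huw d Istr Jstr hI hJ f hfdef hfI

end BinaryGraphModels
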